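/- Let 2 < p < 14/3 and let u : ℝ² → ℂ be a Schwartz function with u not identically zero. Then there exists λ₀ > 0 such that E(u_λ) < 0 for every λ ∈ (0, λ₀); since M(u_λ) = M(u), for every c > 0 the infimum of E over Schwartz functions with squared L²-norm equal to c is negative. -/

import Mathlib

open MeasureTheory

noncomputable section

/-- Partial derivative in the first (x) variable. -/
def pdx (u : ℝ × ℝ → ℂ) : ℝ × ℝ → ℂ := fun z => deriv (fun x => u (x, z.2)) z.1

/-- Partial derivative in the second (y) variable. -/
def pdy (u : ℝ × ℝ → ℂ) : ℝ × ℝ → ℂ := fun z => deriv (fun y => u (z.1, y)) z.2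

/-- Second partial derivative in x. -/
def pdxx (u : ℝ × ℝ → ℂ) : ℝ × ℝ → ℂ := pdx (pdx u)

/-- Second partial derivative in y. -/
def pdyy (u : ℝ × ℝ → ℂ) : ℝ × ℝ → ℂ := pdy (pdy u)

/-- Fourth partial derivative in y. -/
def pdyyyy (u : ℝ × ℝ → ℂ) : ℝ × ℝ → ℂ := pdy (pdy (pdy (pdy u)))

/-- X(u) = ∫ |∂ₓ u|². -/
def Xf (u : ℝ × ℝ → ℂ) : ℝ := ∫ z : ℝ × ℝ, ‖pdx u z‖ ^ 2

/-- Y(u) = ∫ |∂_yy u|². -/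
def Yf (u : ℝ × ℝ → ℂ) : ℝ := ∫ z : ℝ × ℝ, ‖pdyy u z‖ ^ 2

/-- M(u) = ∫ |u|². -/
def Mf (u : ℝ × ℝ → ℂ) : ℝ := ∫ z : ℝ × ℝ, ‖u z‖ ^ 2

/-- P(u) = ∫ |u|ᵖ. -/
def Pf (p : ℝ) (u : ℝ × ℝ → ℂ) : ℝ := ∫ z : ℝ × ℝ, ‖u z‖ ^ p

/-- Energy E(u) = X(u)/2 + Y(u)/2 − P(u)/p. -/
def Ef (p : ℝ) (u : ℝ × ℝ → ℂ) : ℝ := Xf u / 2 + Yf u / 2 - Pf p u / p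

/-- Action J_ω(u) = X(u)/2 + Y(u)/2 + (ω/2) M(u) − P(u)/p. -/
def Jf (p ω : ℝ) (u : ℝ × ℝ → ℂ) : ℝ := Xf u / 2 + Yf u / 2 + ω / 2 * Mf u - Pf p u / p

/-- Standing wave equation −∂ₓₓu + ∂_yyyy u + ω u = |u|^{p−2} u pointwise. -/
def IsStandingWave (p ω : ℝ) (u : ℝ × ℝ → ℂ) : Prop :=
  ∀ z : ℝ × ℝ, -pdxx u z + pdyyyy u z + (ω : ℂ) * u z = ((‖u z‖ ^ (p - 2) : ℝ) : ℂ) * u z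

/-- Mass-preserving anisotropic scaling u_λ(x,y) = λ^{3/8} u(λ^{1/2} x, λ^{1/4} y). -/
def uscale (l : ℝ) (u : ℝ × ℝ → ℂ) : ℝ × ℝ → ℂ :=
  fun z => ((l ^ ((3 : ℝ) / 8) : ℝ) : ℂ) * u (l ^ ((1 : ℝ) / 2) * z.1, l ^ ((1 : ℝ) / 4) * z.2)

end


/-!
Under the mass-preserving scaling, `X` and `Y` scale like `λ` while `P` scales like
`λ ^ (3 (p - 2) / 8)`, so `E(u_λ) = λ (X + Y) / 2 - λ ^ (3 (p - 2) / 8) P / p`. For `p < 14 / 3`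
the exponent is below `1` and the negative term wins as `λ → 0`.

The infimum is negative only if it is finite (an unbounded-below set of reals has `sInf = 0`).
Finiteness follows from the anisotropic Gagliardo–Nirenberg inequality
`P ≤ (4 √M √X) ^ ((p - 2) / 2) M ^ (1 - (p - 2) / 8) Y ^ ((p - 2) / 8)`,
whose degree `3 (p - 2) / 8 < 1` in `(X, Y)` makes `E` coercive on each mass sphere. It combines
two one-dimensional facts, `|f t|² ≤ 2 ∫ |f| |f'|` and `∫ |f'|² ≤ ∫ |f| |f''|`: along `x`-lines they
give `∫ |u(x, y)|² dy ≤ 2 √M √X`, along `y`-lines `|u(x, y)|² ≤ 2 A(x) ^ (3/4) B(x) ^ (1/4)` with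
`A(x) = ∫ |u(x, ·)|²` and `B(x) = ∫ |∂_yy u(x, ·)|²`, and Hölder's inequality in `x` finishes.
-/

open MeasureTheory Filter Set Topology LineDeriv
open scoped SchwartzMap

section MeanInequalities

variable {α : Type*} [MeasurableSpace α] {μ : Measure α}

theorem integral_norm_mul_norm_le_sqrt {E : Type*} [NormedAddCommGroup E] {f g : α → E}
    (hf : MemLp f 2 μ) (hg : MemLp g 2 μ) :
    ∫ a, ‖f a‖ * ‖g a‖ ∂μ ≤ √(∫ a, ‖f a‖ ^ 2 ∂μ) * √(∫ a, ‖g a‖ ^ 2 ∂μ) := by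
  simpa [Real.sqrt_eq_rpow] using integral_mul_norm_le_Lp_mul_Lq (μ := μ)
    Real.HolderConjugate.two_two (by simpa using hf) (by simpa using hg)

variable {f g : α → ℝ} {a b : ℝ}

theorem integrable_rpow_mul_rpow (hf0 : ∀ x, 0 ≤ f x) (hg0 : ∀ x, 0 ≤ g x)
    (hf : Integrable f μ) (hg : Integrable g μ) (ha : 0 ≤ a) (hb : 0 ≤ b) (hab : a + b = 1) :
    Integrable (fun x => f x ^ a * g x ^ b) μ := by
  refine (hf.add hg).mono' ((hf.aemeasurable.pow_const a).mul
    (hg.aemeasurable.pow_const b)).aestronglyMeasurable (ae_of_all _ fun x => ?_)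
  have hf0x := hf0 x
  have hg0x := hg0 x
  rw [Real.norm_of_nonneg (by positivity), Pi.add_apply]
  nlinarith [Real.geom_mean_le_arith_mean2_weighted ha hb hf0x hg0x hab]

theorem integral_rpow_mul_rpow_le (hf0 : ∀ x, 0 ≤ f x) (hg0 : ∀ x, 0 ≤ g x)
    (hf : Integrable f μ) (hg : Integrable g μ) (ha : 0 ≤ a) (hb : 0 ≤ b) (hab : a + b = 1) :
    ∫ x, f x ^ a * g x ^ b ∂μ ≤ (∫ x, f x ∂μ) ^ a * (∫ x, g x ∂μ) ^ b := by
  have hF : 0 ≤ ∫ x, f x ∂μ := integral_nonneg hf0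
  have hG : 0 ≤ ∫ x, g x ∂μ := integral_nonneg hg0
  have hofReal : ∀ x, ENNReal.ofReal (f x) ^ a * ENNReal.ofReal (g x) ^ b
      = ENNReal.ofReal (f x ^ a * g x ^ b) := fun x => by
    have hf0x := hf0 x
    rw [ENNReal.ofReal_mul (by positivity), ENNReal.ofReal_rpow_of_nonneg (hf0 x) ha,
      ENNReal.ofReal_rpow_of_nonneg (hg0 x) hb]
  have hL := ENNReal.lintegral_mul_norm_pow_le (μ := μ) hf.aemeasurable.ennreal_ofReal
    hg.aemeasurable.ennreal_ofReal ha hb hab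
  simp_rw [hofReal, ← ofReal_integral_eq_lintegral_ofReal hf (ae_of_all _ hf0),
    ← ofReal_integral_eq_lintegral_ofReal hg (ae_of_all _ hg0),
    ENNReal.ofReal_rpow_of_nonneg hF ha, ENNReal.ofReal_rpow_of_nonneg hG hb,
    ← ENNReal.ofReal_mul (Real.rpow_nonneg hF _)] at hL
  rw [integral_eq_lintegral_of_nonneg_ae (ae_of_all _ fun x => by
      have := hf0 x; have := hg0 x; positivity)
    (integrable_rpow_mul_rpow hf0 hg0 hf hg ha hb hab).aestronglyMeasurable]
  exact ENNReal.toReal_le_of_le_ofReal (by positivity) hL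

end MeanInequalities

theorem exists_mul_rpow_le_half_add {R γ : ℝ} (hR : 0 ≤ R) (hγ0 : 0 ≤ γ) (hγ1 : γ < 1) :
    ∃ K, ∀ t, 0 ≤ t → R * t ^ γ ≤ t / 2 + K := by
  set K := (R * 2 ^ γ) ^ (1 - γ)⁻¹
  have hK0 : 0 ≤ K := by positivity
  have hK : K ^ (1 - γ) = R * 2 ^ γ := Real.rpow_inv_rpow (by positivity) (by linarith)
  refine ⟨K, fun t ht => ?_⟩
  have hyoung := Real.geom_mean_le_arith_mean2_weighted hγ0 (by linarith)
    (by positivity : 0 ≤ t / 2) hK0 (add_sub_cancel γ 1)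
  rw [hK, Real.div_rpow ht zero_le_two] at hyoung
  have h2 : (2 : ℝ) ^ γ ≠ 0 := by positivity
  calc R * t ^ γ = t ^ γ / 2 ^ γ * (R * 2 ^ γ) := by field_simp
    _ ≤ γ * (t / 2) + (1 - γ) * K := hyoung
    _ ≤ t / 2 + K := by nlinarith

theorem exists_forall_mul_sub_rpow_mul_neg {a b α : ℝ} (hb : 0 < b) (hα : α < 1) :
    ∃ l₀ > 0, ∀ l, 0 < l → l < l₀ → l * a - l ^ α * b < 0 := by
  have hlim : Tendsto (fun l : ℝ => l ^ (1 - α) * a) (𝓝 0) (𝓝 0) := by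
    simpa [Real.zero_rpow (by linarith : 1 - α ≠ 0)] using
      ((Real.continuousAt_rpow_const 0 (1 - α) (Or.inr (by linarith))).tendsto).mul_const a
  obtain ⟨ε, hε, hball⟩ := Metric.eventually_nhds_iff.1 (hlim.eventually (gt_mem_nhds hb))
  refine ⟨ε, hε, fun l hl hlε => ?_⟩
  have hsmall : l ^ (1 - α) * a < b := hball (by rwa [Real.dist_eq, sub_zero, abs_of_pos hl])
  have hfactor : l * a - l ^ α * b = l ^ α * (l ^ (1 - α) * a - b) := by
    rw [mul_sub, ← mul_assoc, ← Real.rpow_add hl, add_sub_cancel, Real.rpow_one]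
  rw [hfactor]
  exact mul_neg_of_pos_of_neg (by positivity) (by linarith)

theorem rpow_eq_sq_rpow_mul_sq {t p : ℝ} (ht : 0 ≤ t) (hp : p ≠ 0) :
    t ^ p = (t ^ 2) ^ ((p - 2) / 2) * t ^ 2 := by
  rw [← Real.rpow_natCast t 2, ← Real.rpow_mul ht,
    ← Real.rpow_add' ht (by push_cast; ring_nf; exact hp)]
  congr 1
  push_cast
  ring

theorem two_mul_rpow_mul_le {A B S s : ℝ} (hA : 0 ≤ A) (hB : 0 ≤ B) (hs : 0 ≤ s)
    (hAS : A ≤ S) :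
    (2 * (A ^ (3 / 4 : ℝ) * B ^ (1 / 4 : ℝ))) ^ s * A ≤
      (2 * S) ^ s * (A ^ (1 - s / 4) * B ^ (s / 4)) := by
  have hsplit : A ^ (3 / 4 * s) * A = A ^ s * A ^ (1 - s / 4) := by
    rw [← Real.rpow_add_one' hA (by positivity), ← Real.rpow_add' hA (by linarith)]
    ring_nf
  rw [Real.mul_rpow zero_le_two (by positivity), Real.mul_rpow (by positivity) (by positivity),
    ← Real.rpow_mul hA, ← Real.rpow_mul hB, Real.mul_rpow zero_le_two (hA.trans hAS)]
  calc 2 ^ s * (A ^ (3 / 4 * s) * B ^ (1 / 4 * s)) * A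
      = 2 ^ s * (A ^ s * (A ^ (1 - s / 4) * B ^ (s / 4))) := by
        rw [mul_assoc, mul_right_comm _ _ A, hsplit]
        ring_nf
    _ ≤ 2 ^ s * (S ^ s * (A ^ (1 - s / 4) * B ^ (s / 4))) := by gcongr
    _ = _ := by ring

namespace SchwartzMap

section Integrability

variable {E F : Type*} [NormedAddCommGroup E] [NormedSpace ℝ E] [MeasurableSpace E]
  [BorelSpace E] [SecondCountableTopology E] [NormedAddCommGroup F] [NormedSpace ℝ F]
  {μ : Measure E} [μ.HasTemperateGrowth]

theorem integrable_norm_mul_norm (f g : 𝓢(E, F)) :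
    Integrable (fun x => ‖f x‖ * ‖g x‖) μ :=
  (f.memLp 2 μ).norm.integrable_mul (g.memLp 2 μ).norm

theorem integrable_sq_norm (f : 𝓢(E, F)) : Integrable (fun x => ‖f x‖ ^ 2) μ := by
  simpa only [sq] using f.integrable_norm_mul_norm f

theorem integrable_norm_rpow (f : 𝓢(E, F)) {p : ℝ} (hp : 0 < p) :
    Integrable (fun x => ‖f x‖ ^ p) μ := by
  have := (f.memLp (ENNReal.ofReal p) μ).integrable_norm_rpow (by simpa using hp) (by simp)
  rwa [ENNReal.toReal_ofReal hp.le] at this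

end Integrability

section OneDimensional

variable {F : Type*} [NormedAddCommGroup F] [InnerProductSpace ℝ F]

theorem sq_norm_le_two_mul_integral_norm_mul_norm_deriv (f : 𝓢(ℝ, F)) (t₀ : ℝ) :
    ‖f t₀‖ ^ 2 ≤ 2 * ∫ t, ‖f t‖ * ‖deriv f t‖ := by
  set f' := derivCLM ℝ F f
  change _ ≤ 2 * ∫ t, ‖f t‖ * ‖f' t‖
  set φ : ℝ → ℝ := fun t => 2 * inner ℝ (f t) (f' t)
  have hφ_le : ∀ t, |φ t| ≤ 2 * (‖f t‖ * ‖f' t‖) := fun t => by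
    simpa [φ, abs_mul] using mul_le_mul_of_nonneg_left (abs_real_inner_le_norm _ _) zero_le_two
  have hbound : Integrable (fun t => 2 * (‖f t‖ * ‖f' t‖)) :=
    (f.integrable_norm_mul_norm f').const_mul 2
  have hφ : Integrable φ := hbound.mono'
    (continuous_const.mul (f.continuous.inner f'.continuous)).aestronglyMeasurable
    (ae_of_all _ hφ_le)
  have hlim : Tendsto (fun t => ‖f t‖ ^ 2) atTop (𝓝 0) := by
    simpa using (f.tendsto_cocompact.mono_left atTop_le_cocompact).norm.pow 2
  have hFTC : ∫ t in Ioi t₀, φ t = 0 - ‖f t₀‖ ^ 2 :=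
    integral_Ioi_of_hasDerivAt_of_tendsto' (fun t _ => (f.hasDerivAt t).norm_sq)
      hφ.integrableOn hlim
  calc ‖f t₀‖ ^ 2 = -∫ t in Ioi t₀, φ t := by linarith
    _ ≤ ∫ t in Ioi t₀, |φ t| := (neg_le_abs _).trans abs_integral_le_integral_abs
    _ ≤ ∫ t in Ioi t₀, 2 * (‖f t‖ * ‖f' t‖) :=
      setIntegral_mono hφ.abs.integrableOn hbound.integrableOn hφ_le
    _ ≤ ∫ t, 2 * (‖f t‖ * ‖f' t‖) :=
      setIntegral_le_integral hbound (ae_of_all _ fun t => by positivity)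
    _ = 2 * ∫ t, ‖f t‖ * ‖f' t‖ := integral_const_mul _ _

theorem integral_sq_norm_deriv_le (f : 𝓢(ℝ, F)) :
    ∫ t, ‖deriv f t‖ ^ 2 ≤ ∫ t, ‖f t‖ * ‖deriv (deriv f) t‖ := by
  set f' := derivCLM ℝ F f
  set f'' := derivCLM ℝ F f'
  change ∫ t, ‖f' t‖ ^ 2 ≤ ∫ t, ‖f t‖ * ‖f'' t‖
  have hderiv : ∀ t, HasDerivAt (fun s => inner ℝ (f s) (f' s))
      (inner ℝ (f t) (f'' t) + ‖f' t‖ ^ 2) t := fun t => by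
    refine ((f.hasDerivAt t).inner ℝ (f'.hasDerivAt t)).congr_deriv ?_
    change inner ℝ (f t) (f'' t) + inner ℝ (f' t) (f' t) = _
    rw [real_inner_self_eq_norm_sq]
  have hinner : ∀ g : 𝓢(ℝ, F), Integrable (fun t => inner ℝ (f t) (g t)) := fun g =>
    (f.integrable_norm_mul_norm g).mono' (f.continuous.inner g.continuous).aestronglyMeasurable
      (ae_of_all _ fun t => (Real.norm_eq_abs _).trans_le (abs_real_inner_le_norm _ _))
  have hzero := integral_eq_zero_of_hasDerivAt_of_integrable hderiv
    ((hinner f'').add f'.integrable_sq_norm) (hinner f')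
  rw [integral_add (hinner f'') f'.integrable_sq_norm] at hzero
  have := integral_mono (f := fun t => -inner ℝ (f t) (f'' t)) (hinner f'').neg
    (f.integrable_norm_mul_norm f'')
    fun t => (neg_le_abs _).trans (abs_real_inner_le_norm (f t) (f'' t))
  rw [integral_neg] at this
  linarith

theorem sq_norm_le_gagliardoNirenberg (f : 𝓢(ℝ, F)) (t : ℝ) :
    ‖f t‖ ^ 2 ≤
      2 * ((∫ s, ‖f s‖ ^ 2) ^ (3 / 4 : ℝ) * (∫ s, ‖deriv (deriv f) s‖ ^ 2) ^ (1 / 4 : ℝ)) := by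
  set f' := derivCLM ℝ F f
  set f'' := derivCLM ℝ F f'
  set a := ∫ s, ‖f s‖ ^ 2
  set b := ∫ s, ‖f'' s‖ ^ 2
  have ha : 0 ≤ a := integral_nonneg fun s => by positivity
  have hb : 0 ≤ b := integral_nonneg fun s => by positivity
  have hw : ∫ s, ‖f' s‖ ^ 2 ≤ ∫ s, ‖f s‖ * ‖f'' s‖ := f.integral_sq_norm_deriv_le
  calc ‖f t‖ ^ 2 ≤ 2 * ∫ s, ‖f s‖ * ‖f' s‖ :=
        f.sq_norm_le_two_mul_integral_norm_mul_norm_deriv t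
    _ ≤ 2 * (√a * √(∫ s, ‖f' s‖ ^ 2)) := by
        gcongr
        exact integral_norm_mul_norm_le_sqrt (f.memLp 2) (f'.memLp 2)
    _ ≤ 2 * (√a * √(√a * √b)) := by
        gcongr
        exact hw.trans (integral_norm_mul_norm_le_sqrt (f.memLp 2) (f''.memLp 2))
    _ = 2 * (a ^ (3 / 4 : ℝ) * b ^ (1 / 4 : ℝ)) := by
        simp only [Real.sqrt_eq_rpow]
        rw [Real.mul_rpow (by positivity) (by positivity), ← Real.rpow_mul ha, ← Real.rpow_mul hb,
          ← mul_assoc (a ^ _), ← Real.rpow_add' ha (by norm_num)]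
        norm_num

end OneDimensional

section Slices

variable {E F : Type*} [NormedAddCommGroup E] [NormedSpace ℝ E] [NormedAddCommGroup F]
  [NormedSpace ℝ F]

noncomputable def restrictLine (z m : E) (hm : m ≠ 0) : 𝓢(E, F) →L[ℝ] 𝓢(ℝ, F) :=
  compCLMOfAntilipschitz ℝ (g := fun t : ℝ => z + t • m) (K := ‖m‖₊⁻¹) (by fun_prop) <|
    AntilipschitzWith.of_le_mul_dist fun s t => by
      rw [dist_add_left, dist_eq_norm (s • m), ← sub_smul, norm_smul, NNReal.coe_inv, coe_nnnorm,
        mul_comm, mul_inv_cancel_right₀ (norm_ne_zero_iff.2 hm), dist_eq_norm]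

@[simp]
theorem restrictLine_apply (z m : E) (hm : m ≠ 0) (f : 𝓢(E, F)) (t : ℝ) :
    restrictLine z m hm f t = f (z + t • m) := rfl

theorem deriv_restrictLine (z m : E) (hm : m ≠ 0) (f : 𝓢(E, F)) :
    deriv (restrictLine z m hm f) = restrictLine z m hm (∂_{m} f) := by
  ext t
  have hline : HasDerivAt (fun t : ℝ => z + t • m) m t := by
    simpa using ((hasDerivAt_id t).smul_const m).const_add z
  exact ((f.hasFDerivAt _).comp_hasDerivAt t hline).deriv

noncomputable def sliceFst (y : ℝ) : 𝓢(ℝ × ℝ, F) →L[ℝ] 𝓢(ℝ, F) :=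
  restrictLine (0, y) (1, 0) (by simp)

noncomputable def sliceSnd (x : ℝ) : 𝓢(ℝ × ℝ, F) →L[ℝ] 𝓢(ℝ, F) :=
  restrictLine (x, 0) (0, 1) (by simp)

@[simp]
theorem sliceFst_apply (f : 𝓢(ℝ × ℝ, F)) (y t : ℝ) : sliceFst y f t = f (t, y) := by
  simp [sliceFst]

@[simp]
theorem sliceSnd_apply (f : 𝓢(ℝ × ℝ, F)) (x t : ℝ) : sliceSnd x f t = f (x, t) := by
  simp [sliceSnd]

@[simp]
theorem deriv_sliceFst (f : 𝓢(ℝ × ℝ, F)) (y : ℝ) :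
    deriv (sliceFst y f) = sliceFst y (∂_{((1 : ℝ), (0 : ℝ))} f) :=
  deriv_restrictLine _ _ _ f

@[simp]
theorem deriv_sliceSnd (f : 𝓢(ℝ × ℝ, F)) (x : ℝ) :
    deriv (sliceSnd x f) = sliceSnd x (∂_{((0 : ℝ), (1 : ℝ))} f) :=
  deriv_restrictLine _ _ _ f

end Slices

end SchwartzMap

section Scaling

theorem integral_comp_dilation {E : Type*} [NormedAddCommGroup E] [NormedSpace ℝ E]
    (f : ℝ × ℝ → E) {a b : ℝ} (ha : 0 < a) (hb : 0 < b) :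
    ∫ z : ℝ × ℝ, f (a * z.1, b * z.2) = (a * b)⁻¹ • ∫ z, f z := by
  have hemb : MeasurableEmbedding (Prod.map (a * ·) (b * ·)) :=
    ((Homeomorph.mulLeft₀ a ha.ne').prodCongr (Homeomorph.mulLeft₀ b hb.ne')).measurableEmbedding
  have hmap : Measure.map (Prod.map (a * ·) (b * ·)) (volume : Measure (ℝ × ℝ))
      = ENNReal.ofReal (a * b)⁻¹ • volume := by
    rw [Measure.volume_eq_prod,
      ← Measure.map_prod_map _ _ (measurable_const_mul a) (measurable_const_mul b),
      Real.map_volume_mul_left ha.ne', Real.map_volume_mul_left hb.ne', Measure.prod_smul_left,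
      Measure.prod_smul_right, smul_smul, abs_of_pos (inv_pos.2 ha), abs_of_pos (inv_pos.2 hb),
      ← ENNReal.ofReal_mul (inv_pos.2 ha).le, mul_inv]
  have := hemb.integral_map (μ := volume) f
  rw [hmap, integral_smul_measure, ENNReal.toReal_ofReal (by positivity)] at this
  exact this.symm

theorem Mf_eq_Pf (g : ℝ × ℝ → ℂ) : Mf g = Pf 2 g := by
  simp only [Mf, Pf, Real.rpow_two]

theorem Xf_eq_Pf (g : ℝ × ℝ → ℂ) : Xf g = Pf 2 (pdx g) := by
  simp only [Xf, Pf, Real.rpow_two]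

theorem Yf_eq_Pf (g : ℝ × ℝ → ℂ) : Yf g = Pf 2 (pdyy g) := by
  simp only [Yf, Pf, Real.rpow_two]

theorem Mf_smul (t : ℝ) (g : ℝ × ℝ → ℂ) : Mf (t • g) = t ^ 2 * Mf g := by
  simp only [Mf, Pi.smul_apply, norm_smul, mul_pow, Real.norm_eq_abs, sq_abs, integral_const_mul]

theorem Pf_const_mul_comp_dilation (q : ℝ) (g : ℝ × ℝ → ℂ) (k : ℂ) {a b : ℝ} (ha : 0 < a)
    (hb : 0 < b) :
    Pf q (fun z => k * g (a * z.1, b * z.2)) = ‖k‖ ^ q * (a * b)⁻¹ * Pf q g := by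
  simp only [Pf, norm_mul, Real.mul_rpow (norm_nonneg _) (norm_nonneg _)]
  rw [integral_const_mul, integral_comp_dilation (fun z => ‖g z‖ ^ q) ha hb, smul_eq_mul,
    mul_assoc]

theorem pdx_const_mul_comp_dilation (g : ℝ × ℝ → ℂ) (k : ℂ) (a b : ℝ) :
    pdx (fun z => k * g (a * z.1, b * z.2)) = fun z => k * a * pdx g (a * z.1, b * z.2) := by
  ext z
  simp only [pdx, deriv_const_mul_field']
  rw [deriv_comp_mul_left a (fun s => g (s, b * z.2)) z.1, Complex.real_smul, mul_assoc]

theorem pdy_const_mul_comp_dilation (g : ℝ × ℝ → ℂ) (k : ℂ) (a b : ℝ) :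
    pdy (fun z => k * g (a * z.1, b * z.2)) = fun z => k * b * pdy g (a * z.1, b * z.2) := by
  ext z
  simp only [pdy, deriv_const_mul_field']
  rw [deriv_comp_mul_left b (fun s => g (a * z.1, s)) z.2, Complex.real_smul, mul_assoc]

variable {l : ℝ}

theorem norm_rpow_rpow_mul_inv_eq_rpow (hl : 0 < l) (α q : ℝ) :
    ‖((l ^ α : ℝ) : ℂ)‖ ^ q * (l ^ (1 / 2 : ℝ) * l ^ (1 / 4 : ℝ))⁻¹ = l ^ (α * q - 3 / 4) := by
  rw [Complex.norm_real, Real.norm_of_nonneg (by positivity), ← Real.rpow_mul hl.le,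
    ← Real.rpow_add hl, ← Real.rpow_neg hl.le, ← Real.rpow_add hl]
  norm_num [sub_eq_add_neg]

theorem Pf_uscale (hl : 0 < l) (g : ℝ × ℝ → ℂ) (q : ℝ) :
    Pf q (uscale l g) = l ^ (3 * (q - 2) / 8) * Pf q g := by
  unfold uscale
  rw [Pf_const_mul_comp_dilation q g _ (by positivity) (by positivity),
    norm_rpow_rpow_mul_inv_eq_rpow hl]
  ring_nf

theorem Mf_uscale (hl : 0 < l) (g : ℝ × ℝ → ℂ) : Mf (uscale l g) = Mf g := by
  rw [Mf_eq_Pf, Mf_eq_Pf, Pf_uscale hl]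
  norm_num

theorem Xf_uscale (hl : 0 < l) (g : ℝ × ℝ → ℂ) : Xf (uscale l g) = l * Xf g := by
  unfold uscale
  rw [Xf_eq_Pf, Xf_eq_Pf, pdx_const_mul_comp_dilation, ← Complex.ofReal_mul, ← Real.rpow_add hl,
    Pf_const_mul_comp_dilation 2 _ _ (by positivity) (by positivity),
    norm_rpow_rpow_mul_inv_eq_rpow hl]
  norm_num

theorem Yf_uscale (hl : 0 < l) (g : ℝ × ℝ → ℂ) : Yf (uscale l g) = l * Yf g := by
  unfold uscale
  rw [Yf_eq_Pf, Yf_eq_Pf, pdyy, pdy_const_mul_comp_dilation, pdy_const_mul_comp_dilation,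
    ← Complex.ofReal_mul, ← Complex.ofReal_mul, ← Real.rpow_add hl, ← Real.rpow_add hl,
    Pf_const_mul_comp_dilation 2 _ _ (by positivity) (by positivity),
    norm_rpow_rpow_mul_inv_eq_rpow hl, pdyy]
  norm_num

theorem Ef_uscale (hl : 0 < l) (g : ℝ × ℝ → ℂ) (p : ℝ) :
    Ef p (uscale l g) = l * ((Xf g + Yf g) / 2) - l ^ (3 * (p - 2) / 8) * (Pf p g / p) := by
  rw [Ef, Xf_uscale hl, Yf_uscale hl, Pf_uscale hl]
  ring

theorem exists_schwartzMap_coe_eq_uscale (u : 𝓢(ℝ × ℝ, ℂ)) (hl : 0 < l) :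
    ∃ v : 𝓢(ℝ × ℝ, ℂ), ⇑v = uscale l u := by
  let dilation : (ℝ × ℝ) ≃L[ℝ] ℝ × ℝ := LinearEquiv.toContinuousLinearEquiv <|
    (LinearEquiv.smulOfNeZero ℝ ℝ _ (Real.rpow_pos_of_pos hl (1 / 2)).ne').prodCongr
      (LinearEquiv.smulOfNeZero ℝ ℝ _ (Real.rpow_pos_of_pos hl (1 / 4)).ne')
  refine ⟨((l ^ (3 / 8 : ℝ) : ℝ) : ℂ) • SchwartzMap.compCLMOfContinuousLinearEquiv ℝ dilation u, ?_⟩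
  ext z
  simp [uscale, dilation]

end Scaling

section GagliardoNirenberg

local notation "∂₁" => lineDerivOp ((1 : ℝ), (0 : ℝ))
local notation "∂₂" => lineDerivOp ((0 : ℝ), (1 : ℝ))

variable (u : 𝓢(ℝ × ℝ, ℂ))

theorem pdx_eq_lineDerivOp : pdx u = ∂₁ u := by
  ext z
  simpa [pdx, funext (SchwartzMap.sliceFst_apply u z.2)] using
    congrFun (SchwartzMap.deriv_sliceFst u z.2) z.1

theorem pdy_eq_lineDerivOp : pdy u = ∂₂ u := by
  ext z
  simpa [pdy, funext (SchwartzMap.sliceSnd_apply u z.1)] using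
    congrFun (SchwartzMap.deriv_sliceSnd u z.1) z.2

theorem Xf_eq_integral_lineDerivOp : Xf u = ∫ z, ‖∂₁ u z‖ ^ 2 := by
  rw [Xf, pdx_eq_lineDerivOp]

theorem Yf_eq_integral_lineDerivOp : Yf u = ∫ z, ‖∂₂ (∂₂ u) z‖ ^ 2 := by
  rw [Yf, pdyy, pdy_eq_lineDerivOp, pdy_eq_lineDerivOp]

theorem integral_sq_norm_slice_le (x : ℝ) :
    ∫ y, ‖u (x, y)‖ ^ 2 ≤ 2 * (√(Mf u) * √(Xf u)) := by
  set G : ℝ × ℝ → ℝ := fun z => ‖u z‖ * ‖∂₁ u z‖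
  have hG : Integrable G := u.integrable_norm_mul_norm (∂₁ u)
  have hpoint : ∀ y, ‖u (x, y)‖ ^ 2 ≤ 2 * ∫ t, G (t, y) := fun y => by
    simpa using (SchwartzMap.sliceFst y u).sq_norm_le_two_mul_integral_norm_mul_norm_deriv x
  calc ∫ y, ‖u (x, y)‖ ^ 2 ≤ ∫ y, 2 * ∫ t, G (t, y) :=
        integral_mono (by simpa using (SchwartzMap.sliceSnd x u).integrable_sq_norm)
          (hG.integral_prod_right.const_mul 2) hpoint
    _ = 2 * ∫ z, G z := by
        rw [integral_const_mul, Measure.volume_eq_prod, integral_prod_symm G hG]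
    _ ≤ 2 * (√(Mf u) * √(Xf u)) := by
        gcongr
        simpa [Mf, Xf_eq_integral_lineDerivOp] using
          integral_norm_mul_norm_le_sqrt (u.memLp 2) ((∂₁ u).memLp 2)

theorem sq_norm_le_slice (x y : ℝ) :
    ‖u (x, y)‖ ^ 2 ≤ 2 * ((∫ t, ‖u (x, t)‖ ^ 2) ^ (3 / 4 : ℝ) *
      (∫ t, ‖∂₂ (∂₂ u) (x, t)‖ ^ 2) ^ (1 / 4 : ℝ)) := by
  simpa using (SchwartzMap.sliceSnd x u).sq_norm_le_gagliardoNirenberg y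

theorem integral_rpow_slice_le {p : ℝ} (hp : 2 ≤ p) (x : ℝ) :
    ∫ y, ‖u (x, y)‖ ^ p ≤ (4 * √(Mf u) * √(Xf u)) ^ ((p - 2) / 2) *
      ((∫ t, ‖u (x, t)‖ ^ 2) ^ (1 - (p - 2) / 8) *
        (∫ t, ‖∂₂ (∂₂ u) (x, t)‖ ^ 2) ^ ((p - 2) / 8)) := by
  set s := (p - 2) / 2 with hs
  set A := ∫ t, ‖u (x, t)‖ ^ 2
  set B := ∫ t, ‖∂₂ (∂₂ u) (x, t)‖ ^ 2
  set C := (2 * (A ^ (3 / 4 : ℝ) * B ^ (1 / 4 : ℝ))) ^ s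
  have hslice : Integrable (fun y => ‖u (x, y)‖ ^ 2) := by
    simpa using (SchwartzMap.sliceSnd x u).integrable_sq_norm
  have hslice_p : Integrable (fun y => ‖u (x, y)‖ ^ p) := by
    simpa using (SchwartzMap.sliceSnd x u).integrable_norm_rpow (by linarith : 0 < p)
  have hpoint : ∀ y, ‖u (x, y)‖ ^ p ≤ C * ‖u (x, y)‖ ^ 2 := fun y => by
    rw [rpow_eq_sq_rpow_mul_sq (norm_nonneg _) (by linarith)]
    exact mul_le_mul_of_nonneg_right
      (Real.rpow_le_rpow (by positivity) (sq_norm_le_slice u x y) (by positivity)) (by positivity)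
  calc ∫ y, ‖u (x, y)‖ ^ p ≤ ∫ y, C * ‖u (x, y)‖ ^ 2 :=
        integral_mono hslice_p (hslice.const_mul _) hpoint
    _ = C * A := integral_const_mul _ _
    _ ≤ (2 * (2 * (√(Mf u) * √(Xf u)))) ^ s * (A ^ (1 - s / 4) * B ^ (s / 4)) :=
        two_mul_rpow_mul_le (integral_nonneg fun _ => by positivity)
          (integral_nonneg fun _ => by positivity) (by positivity) (integral_sq_norm_slice_le u x)
    _ = _ := by rw [hs]; ring_nf

theorem Pf_le_gagliardoNirenberg {p : ℝ} (hp2 : 2 ≤ p) (hp10 : p ≤ 10) :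
    Pf p u ≤ (4 * √(Mf u) * √(Xf u)) ^ ((p - 2) / 2) *
      (Mf u ^ (1 - (p - 2) / 8) * Yf u ^ ((p - 2) / 8)) := by
  set θ := (p - 2) / 8 with hθ
  set C := (4 * √(Mf u) * √(Xf u)) ^ ((p - 2) / 2)
  set A : ℝ → ℝ := fun x => ∫ t, ‖u (x, t)‖ ^ 2
  set B : ℝ → ℝ := fun x => ∫ t, ‖∂₂ (∂₂ u) (x, t)‖ ^ 2
  have hA0 : ∀ x, 0 ≤ A x := fun x => integral_nonneg fun _ => by positivity
  have hB0 : ∀ x, 0 ≤ B x := fun x => integral_nonneg fun _ => by positivity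
  have hA : Integrable A := u.integrable_sq_norm.integral_prod_left
  have hB : Integrable B := (∂₂ (∂₂ u)).integrable_sq_norm.integral_prod_left
  have hP : Integrable (fun z : ℝ × ℝ => ‖u z‖ ^ p) := u.integrable_norm_rpow (by linarith)
  have hθ0 : 0 ≤ θ := by positivity
  have hθ1 : 0 ≤ 1 - θ := by linarith
  calc Pf p u = ∫ x, ∫ y, ‖u (x, y)‖ ^ p := integral_prod _ hP
    _ ≤ ∫ x, C * (A x ^ (1 - θ) * B x ^ θ) :=
        integral_mono hP.integral_prod_left
          ((integrable_rpow_mul_rpow hA0 hB0 hA hB hθ1 hθ0 (sub_add_cancel 1 θ)).const_mul _)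
          (integral_rpow_slice_le u hp2)
    _ = C * ∫ x, A x ^ (1 - θ) * B x ^ θ := integral_const_mul _ _
    _ ≤ C * ((∫ x, A x) ^ (1 - θ) * (∫ x, B x) ^ θ) := by
        gcongr
        exact integral_rpow_mul_rpow_le hA0 hB0 hA hB hθ1 hθ0 (sub_add_cancel 1 θ)
    _ = C * (Mf u ^ (1 - θ) * Yf u ^ θ) := by
        rw [Mf, Yf_eq_integral_lineDerivOp, Measure.volume_eq_prod,
          integral_prod _ u.integrable_sq_norm, integral_prod _ (∂₂ (∂₂ u)).integrable_sq_norm]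

end GagliardoNirenberg

theorem Pf_pos {u : 𝓢(ℝ × ℝ, ℂ)} (hu : u ≠ 0) {q : ℝ} (hq : 0 < q) : 0 < Pf q u := by
  obtain ⟨z, hz⟩ : ∃ z, u z ≠ 0 := by
    by_contra! h
    exact hu (SchwartzMap.ext h)
  exact integral_pos_of_integrable_nonneg_nonzero
    (u.continuous.norm.rpow_const fun _ => Or.inr hq.le) (u.integrable_norm_rpow hq)
    (fun _ => by positivity) (Real.rpow_pos_of_pos (norm_pos_iff.2 hz) q).ne'

theorem Pf_le_of_Mf_eq (v : 𝓢(ℝ × ℝ, ℂ)) {p c : ℝ} (hp2 : 2 < p) (hp10 : p ≤ 10)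
    (hM : Mf v = c) :
    Pf p v ≤
      (4 * √c) ^ ((p - 2) / 2) * c ^ (1 - (p - 2) / 8) * (Xf v + Yf v) ^ (3 * (p - 2) / 8) := by
  have hX : 0 ≤ Xf v := integral_nonneg fun _ => by positivity
  have hY : 0 ≤ Yf v := integral_nonneg fun _ => by positivity
  have hc : 0 ≤ c := hM ▸ integral_nonneg fun _ => by positivity
  have hs : 0 ≤ (p - 2) / 2 := by linarith
  have hθ : 0 ≤ (p - 2) / 8 := by linarith
  set T := Xf v + Yf v
  refine (hM ▸ Pf_le_gagliardoNirenberg v hp2.le hp10).trans ?_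
  calc (4 * √c * √(Xf v)) ^ ((p - 2) / 2) * (c ^ (1 - (p - 2) / 8) * Yf v ^ ((p - 2) / 8))
      ≤ (4 * √c * √T) ^ ((p - 2) / 2) * (c ^ (1 - (p - 2) / 8) * T ^ ((p - 2) / 8)) := by
        gcongr <;> linarith
    _ = (4 * √c) ^ ((p - 2) / 2) * c ^ (1 - (p - 2) / 8) * T ^ (3 * (p - 2) / 8) := by
        rw [Real.mul_rpow (by positivity) (by positivity), Real.sqrt_eq_rpow T,
          ← Real.rpow_mul (by positivity), mul_mul_mul_comm,
          ← Real.rpow_add' (by positivity) (by linarith)]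
        ring_nf

theorem bddBelow_Ef {p c : ℝ} (hp2 : 2 < p) (hp : p < 14 / 3) (hc : 0 ≤ c) :
    BddBelow {e : ℝ | ∃ v : 𝓢(ℝ × ℝ, ℂ), Mf v = c ∧ Ef p v = e} := by
  obtain ⟨K, hK⟩ := exists_mul_rpow_le_half_add
    (R := (4 * √c) ^ ((p - 2) / 2) * c ^ (1 - (p - 2) / 8) / p) (γ := 3 * (p - 2) / 8)
    (by positivity) (by linarith) (by linarith)
  refine ⟨-K, ?_⟩
  rintro e ⟨v, hM, rfl⟩
  have hX : 0 ≤ Xf v := integral_nonneg fun _ => by positivity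
  have hY : 0 ≤ Yf v := integral_nonneg fun _ => by positivity
  have hP := div_le_div_of_nonneg_right (Pf_le_of_Mf_eq v hp2 (by linarith) hM)
    (by linarith : (0 : ℝ) ≤ p)
  have := hK _ (add_nonneg hX hY)
  rw [mul_div_right_comm] at hP
  rw [Ef]
  linarith

theorem exists_Ef_uscale_neg {p : ℝ} (hp2 : 2 < p) (hp : p < 14 / 3) {u : 𝓢(ℝ × ℝ, ℂ)}
    (hu : u ≠ 0) : ∃ l₀ > (0 : ℝ), ∀ l : ℝ, 0 < l → l < l₀ → Ef p (uscale l u) < 0 := by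
  obtain ⟨l₀, hl₀, hneg⟩ := exists_forall_mul_sub_rpow_mul_neg (a := (Xf u + Yf u) / 2)
    (div_pos (Pf_pos hu (by linarith)) (by linarith : 0 < p)) (by linarith : 3 * (p - 2) / 8 < 1)
  exact ⟨l₀, hl₀, fun l hl hll => (Ef_uscale hl u p).trans_lt (hneg l hl hll)⟩

theorem exists_Mf_eq_Ef_neg {p : ℝ} (hp2 : 2 < p) (hp : p < 14 / 3) {u : 𝓢(ℝ × ℝ, ℂ)}
    (hu : u ≠ 0) {c : ℝ} (hc : 0 < c) : ∃ v : 𝓢(ℝ × ℝ, ℂ), Mf v = c ∧ Ef p v < 0 := by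
  have hMu : 0 < Mf u := Mf_eq_Pf u ▸ Pf_pos hu two_pos
  set w := √(c / Mf u) • u
  have hMw : Mf w = c := by
    rw [show ⇑w = √(c / Mf u) • ⇑u from funext fun z => by simp [w], Mf_smul,
      Real.sq_sqrt (by positivity), div_mul_cancel₀ _ hMu.ne']
  obtain ⟨l₀, hl₀, hneg⟩ := exists_Ef_uscale_neg hp2 hp (smul_ne_zero (by positivity) hu : w ≠ 0)
  obtain ⟨v, hv⟩ := exists_schwartzMap_coe_eq_uscale w (half_pos hl₀)
  exact ⟨v, by rw [hv, Mf_uscale (half_pos hl₀), hMw],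
    hv ▸ hneg _ (half_pos hl₀) (half_lt_self hl₀)⟩

/-- Negative energy for small scalings, and negativity of the constrained infimum. -/
theorem stmt_11 (p : ℝ) (hp1 : 2 < p) (hp2 : p < 14 / 3)
    (u : SchwartzMap (ℝ × ℝ) ℂ) (hu : u ≠ 0) :
    (∃ l₀ > (0 : ℝ), ∀ l : ℝ, 0 < l → l < l₀ → Ef p (uscale l (fun z => u z)) < 0)
      ∧ ∀ c > (0 : ℝ),
          sInf {e : ℝ | ∃ v : SchwartzMap (ℝ × ℝ) ℂ,
            Mf (fun z => v z) = c ∧ Ef p (fun z => v z) = e} < 0 := by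
  refine ⟨exists_Ef_uscale_neg hp1 hp2 hu, fun c hc => ?_⟩
  obtain ⟨v, hMv, hEv⟩ := exists_Mf_eq_Ef_neg hp1 hp2 hu hc
  exact (csInf_le (bddBelow_Ef hp1 hp2 hc.le) ⟨v, hMv, rfl⟩).trans_lt hEv
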